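/- Let n be a positive integer. For k ∈ Ξ_n define ℓ_k(x) := λ_k · (1/8) · Σ_{(ε₁,ε₂,ε₃) ∈ {−1,1}³} Φ_n^*(ε₁x₁ − k₁/(2n), ε₂x₂ − k₂/(2n), ε₃x₃ − k₃/(2n)). Then for every function f : ℝ³ → ℂ and every j ∈ Ξ_n, Σ_{k ∈ Ξ_n} f(k/(2n)) · ℓ_k(j/(2n)) = f(j/(2n)); equivalently, ℓ_k(j/(2n)) = δ_{k,j} for all j, k ∈ Ξ_n. -/

import Mathlib

open MeasureTheory Complex

attribute [local instance] Classical.propDecidable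

/-- The exponential e_k(x) = exp(2 pi i (k1 x1 + k2 x2 + k3 x3)). -/
noncomputable def e3 (k : ℤ × ℤ × ℤ) (x : ℝ × ℝ × ℝ) : ℂ :=
  Complex.exp (2 * Real.pi * Complex.I *
    ((k.1 : ℂ) * x.1 + (k.2.1 : ℂ) * x.2.1 + (k.2.2 : ℂ) * x.2.2))

/-- The point k/(2n) in three-space. -/
noncomputable def pt3 (n : ℕ) (k : ℤ × ℤ × ℤ) : ℝ × ℝ × ℝ :=
  ((k.1 : ℝ) / (2 * n), (k.2.1 : ℝ) / (2 * n), (k.2.2 : ℝ) / (2 * n))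

/-- The cube of integer points with coordinates in [-m, m]. -/
noncomputable def box3 (m : ℕ) : Finset (ℤ × ℤ × ℤ) :=
  Finset.Icc (-(m : ℤ), -(m : ℤ), -(m : ℤ)) ((m : ℤ), (m : ℤ), (m : ℤ))

/-- Λ_m^{†*} = {k : |k_ν + k_μ| ≤ m and |k_ν - k_μ| ≤ m for all ν < μ}. -/
noncomputable def LamDagStar (m : ℕ) : Finset (ℤ × ℤ × ℤ) :=
  (box3 m).filter fun k =>
    |k.1 + k.2.1| ≤ (m : ℤ) ∧ |k.1 - k.2.1| ≤ (m : ℤ) ∧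
    |k.1 + k.2.2| ≤ (m : ℤ) ∧ |k.1 - k.2.2| ≤ (m : ℤ) ∧
    |k.2.1 + k.2.2| ≤ (m : ℤ) ∧ |k.2.1 - k.2.2| ≤ (m : ℤ)

/-- Congruence modulo the face-centered cubic lattice Bℤ³. -/
def fccCong (n : ℕ) (μ ν : ℤ × ℤ × ℤ) : Prop :=
  ∃ m : ℤ × ℤ × ℤ, Even (m.1 + m.2.1 + m.2.2) ∧
    μ.1 - ν.1 = (n : ℤ) * m.1 ∧ μ.2.1 - ν.2.1 = (n : ℤ) * m.2.1 ∧
    μ.2.2 - ν.2.2 = (n : ℤ) * m.2.2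

/-- μ_ν = 1 / #{μ ∈ Λ_n^{†*} : μ ≡ ν mod Bℤ³}. -/
noncomputable def mu3 (n : ℕ) (ν : ℤ × ℤ × ℤ) : ℝ :=
  1 / (((LamDagStar n).filter (fun μ => fccCong n μ ν)).card : ℝ)

/-- Φ_n^*(x) = (1/(2n³)) Σ_{ν ∈ Λ_n^{†*}} μ_ν e_ν(x). -/
noncomputable def Phi3star (n : ℕ) (x : ℝ × ℝ × ℝ) : ℂ :=
  (1 / (2 * (n : ℂ) ^ 3)) * ∑ ν ∈ LamDagStar n, (mu3 n ν : ℂ) * e3 ν x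

/-- Ξ_n = {k : 0 ≤ k_i ≤ n, k1 ≡ k2 ≡ k3 (mod 2)}. -/
noncomputable def Xi3 (n : ℕ) : Finset (ℤ × ℤ × ℤ) :=
  (Finset.Icc ((0 : ℤ), (0 : ℤ), (0 : ℤ)) ((n : ℤ), (n : ℤ), (n : ℤ))).filter
    fun k => k.1 % 2 = k.2.1 % 2 ∧ k.2.1 % 2 = k.2.2 % 2

/-- The cubature weight λ_k = 2^{3-m}, m = #{i : k_i ∈ {0, n}}. -/
noncomputable def lam3 (n : ℕ) (k : ℤ × ℤ × ℤ) : ℝ :=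
  2 ^ (3 - ((if k.1 = 0 ∨ k.1 = (n : ℤ) then 1 else 0)
    + (if k.2.1 = 0 ∨ k.2.1 = (n : ℤ) then 1 else 0)
    + (if k.2.2 = 0 ∨ k.2.2 = (n : ℤ) then 1 else 0) : ℕ))

/-- The fundamental interpolation function ℓ_k. -/
noncomputable def ell3 (n : ℕ) (k : ℤ × ℤ × ℤ) (x : ℝ × ℝ × ℝ) : ℂ :=
  (lam3 n k : ℂ) * (1 / 8) *
    ∑ ε ∈ (({-1, 1} : Finset ℤ) ×ˢ (({-1, 1} : Finset ℤ) ×ˢ ({-1, 1} : Finset ℤ))),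
      Phi3star n ((ε.1 : ℝ) * x.1 - (k.1 : ℝ) / (2 * n),
        (ε.2.1 : ℝ) * x.2.1 - (k.2.1 : ℝ) / (2 * n),
        (ε.2.2 : ℝ) * x.2.2 - (k.2.2 : ℝ) / (2 * n))

open Finset

/-!
At a node, `e_ν (m / (2n)) = ζ ^ (ν ⬝ m)` with `ζ = exp (π i / n)`. When the coordinates of `m` have
equal parity, `ν ↦ ζ ^ (ν ⬝ m)` is invariant under the face-centred cubic lattice `Bℤ³`.
`Λ_n^{†*}` is the closed Voronoi cell of `Bℤ³`, so it meets every class, and the weights `μ_ν`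
turn the sum over it into a sum over the fundamental box `[0, 2n) × [0, n) × [0, n)` of `2n³`
points, which factors into three geometric sums: `Φ_n^* (m / (2n))` is `1` if `2n ∣ m` and `0`
otherwise. For nodes `j, k ∈ Ξ_n`, the point `ε j - k` lies in `2nℤ³` only if `j = k`, and then
for exactly `8 / λ_k` sign vectors `ε`.
-/

theorem Finset.sum_div_card_fiber {ι κ K : Type*} [DecidableEq κ] [Semifield K] [CharZero K]
    (s : Finset ι) (g : ι → κ) (φ : κ → K) :
    ∑ i ∈ s, φ (g i) / #{j ∈ s | g j = g i} = ∑ b ∈ s.image g, φ b := by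
  refine (sum_image' _ fun i hi => ?_).symm
  have hcard : (#{j ∈ s | g j = g i} : K) ≠ 0 := Nat.cast_ne_zero.mpr (card_ne_zero_of_mem
    (mem_filter.mpr ⟨hi, rfl⟩))
  rw [sum_congr rfl fun j hj => by rw [(mem_filter.mp hj).2], sum_const, nsmul_eq_mul,
    mul_div_cancel₀ _ hcard]

theorem Finset.sum_product_three_mul {α β γ R : Type*} [CommSemiring R] (s : Finset α)
    (t : Finset β) (u : Finset γ) (f : α → R) (g : β → R) (h : γ → R) :
    ∑ x ∈ s ×ˢ t ×ˢ u, f x.1 * g x.2.1 * h x.2.2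
      = (∑ a ∈ s, f a) * (∑ b ∈ t, g b) * (∑ c ∈ u, h c) := by
  rw [mul_assoc, sum_mul_sum, sum_mul_sum, sum_product]
  simp only [sum_product, mul_sum, mul_assoc]

theorem Int.sum_Ico_zero_eq_sum_range {M : Type*} [AddCommMonoid M] (N : ℕ) (f : ℤ → M) :
    ∑ a ∈ Ico (0 : ℤ) N, f a = ∑ i ∈ Finset.range N, f i := by
  simp [Int.Ico_eq_finset_map, sum_map]

theorem IsPrimitiveRoot.sum_range_zpow_mul {K : Type*} [Field K] {ζ : K} {k : ℕ}
    (hζ : IsPrimitiveRoot ζ k) {N : ℕ} {w : ℤ} (hNw : (k : ℤ) ∣ N * w) :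
    ∑ i ∈ range N, ζ ^ ((i : ℤ) * w) = if (k : ℤ) ∣ w then (N : K) else 0 := by
  have hpow : ∀ i : ℕ, ζ ^ ((i : ℤ) * w) = (ζ ^ w) ^ i := fun i => by
    rw [mul_comm, zpow_mul, zpow_natCast]
  simp_rw [hpow]
  split_ifs with hw
  · simp [(hζ.zpow_eq_one_iff_dvd w).mpr hw]
  · have hne : ζ ^ w ≠ 1 := fun h => hw ((hζ.zpow_eq_one_iff_dvd w).mp h)
    have hone : (ζ ^ w) ^ N = 1 := by
      rwa [← zpow_natCast, ← zpow_mul, hζ.zpow_eq_one_iff_dvd, mul_comm]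
    rw [geom_sum_eq hne, hone, sub_self, zero_div]

def dot3 (a b : ℤ × ℤ × ℤ) : ℤ := a.1 * b.1 + a.2.1 * b.2.1 + a.2.2 * b.2.2

section Lattice

variable {n : ℕ} {a b c : ℤ × ℤ × ℤ}

theorem fccCong_refl (n : ℕ) (a : ℤ × ℤ × ℤ) : fccCong n a a :=
  ⟨0, by simp, by simp, by simp, by simp⟩

theorem fccCong.symm (h : fccCong n a b) : fccCong n b a := by
  obtain ⟨m, ⟨r, hr⟩, h₁, h₂, h₃⟩ := h
  refine ⟨-m, ⟨-r, ?_⟩, ?_, ?_, ?_⟩ <;> simp only [Prod.fst_neg, Prod.snd_neg] <;> linarith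

theorem fccCong.trans (h : fccCong n a b) (h' : fccCong n b c) : fccCong n a c := by
  obtain ⟨m, ⟨r, hr⟩, h₁, h₂, h₃⟩ := h
  obtain ⟨m', ⟨r', hr'⟩, h₁', h₂', h₃'⟩ := h'
  refine ⟨m + m', ⟨r + r', ?_⟩, ?_, ?_, ?_⟩ <;> simp only [Prod.fst_add, Prod.snd_add] <;> linarith

theorem fccCong_sub_smul (x : ℤ × ℤ × ℤ) {v : ℤ × ℤ × ℤ} (hv : Even (v.1 + v.2.1 + v.2.2)) :
    fccCong n (x - (n : ℤ) • v) x := by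
  obtain ⟨r, hr⟩ := hv
  exact ⟨-v, ⟨-r, by simp only [Prod.fst_neg, Prod.snd_neg]; linarith⟩, by simp, by simp, by simp⟩

/-- Subtract the lattice vector `n • (x₂ / n - x₃ / n, x₂ / n, x₃ / n)`, which reduces the last two
coordinates mod `n`, then reduce the first one mod `2n`. -/
def fccReduce (n : ℕ) (x : ℤ × ℤ × ℤ) : ℤ × ℤ × ℤ :=
  ((x.1 - n * (x.2.1 / n - x.2.2 / n)) % (2 * n), x.2.1 % n, x.2.2 % n)

noncomputable def fccBox (n : ℕ) : Finset (ℤ × ℤ × ℤ) :=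
  Ico 0 (2 * n : ℤ) ×ˢ Ico 0 (n : ℤ) ×ˢ Ico 0 (n : ℤ)

theorem fccCong_fccReduce (n : ℕ) (x : ℤ × ℤ × ℤ) : fccCong n x (fccReduce n x) := by
  set y := x.1 - n * (x.2.1 / n - x.2.2 / n) with hy
  have e₁ := Int.emod_add_mul_ediv y (2 * n)
  have e₂ := Int.emod_add_mul_ediv x.2.1 n
  have e₃ := Int.emod_add_mul_ediv x.2.2 n
  refine ⟨(x.2.1 / n - x.2.2 / n + 2 * (y / (2 * n)), x.2.1 / n, x.2.2 / n),
    ⟨x.2.1 / n + y / (2 * n), by ring⟩, ?_, ?_, ?_⟩ <;> simp only [fccReduce, ← hy]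
  · linear_combination hy - e₁
  · linear_combination -e₂
  · linear_combination -e₃

theorem fccReduce_eq_of_fccCong (hn : 0 < n) (h : fccCong n a b) :
    fccReduce n a = fccReduce n b := by
  obtain ⟨m, ⟨r, hr⟩, h₁, h₂, h₃⟩ := h
  have hn' : (n : ℤ) ≠ 0 := by positivity
  rw [sub_eq_iff_eq_add'] at h₁ h₂ h₃
  simp only [fccReduce, h₁, h₂, h₃, Int.add_mul_emod_self_left, Int.add_mul_ediv_left _ _ hn']
  congr 1
  rw [show b.1 + n * m.1 - n * (b.2.1 / n + m.2.1 - (b.2.2 / n + m.2.2))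
    = b.1 - n * (b.2.1 / n - b.2.2 / n) + 2 * n * (r - m.2.1) by linear_combination n * hr,
    Int.add_mul_emod_self_left]

theorem fccCong_iff_fccReduce_eq (hn : 0 < n) : fccCong n a b ↔ fccReduce n a = fccReduce n b :=
  ⟨fccReduce_eq_of_fccCong hn, fun h =>
    (fccCong_fccReduce n a).trans (h ▸ (fccCong_fccReduce n b).symm)⟩

theorem fccReduce_mem_fccBox (hn : 0 < n) (x : ℤ × ℤ × ℤ) : fccReduce n x ∈ fccBox n := by
  have hn' : (0 : ℤ) < n := by exact_mod_cast hn
  simp only [fccBox, fccReduce, mem_product, mem_Ico]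
  exact ⟨⟨Int.emod_nonneg _ (by positivity), Int.emod_lt_of_pos _ (by positivity)⟩,
    ⟨Int.emod_nonneg _ hn'.ne', Int.emod_lt_of_pos _ hn'⟩, Int.emod_nonneg _ hn'.ne',
    Int.emod_lt_of_pos _ hn'⟩

theorem fccReduce_of_mem_fccBox (h : a ∈ fccBox n) : fccReduce n a = a := by
  simp only [fccBox, mem_product, mem_Ico] at h
  obtain ⟨⟨h₁, h₁'⟩, ⟨h₂, h₂'⟩, h₃, h₃'⟩ := h
  simp [fccReduce, Int.ediv_eq_zero_of_lt, Int.emod_eq_of_lt, *]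

end Lattice

/-- The minimal vectors of the lattice `fccCong 1`: `LamDagStar n` is the set of `x` with
`dot3 x v ≤ n` for all of them, the Voronoi cell of `0` in the lattice scaled by `n`. -/
def d3Roots : Finset (ℤ × ℤ × ℤ) :=
  {(1, 1, 0), (1, -1, 0), (-1, 1, 0), (-1, -1, 0), (1, 0, 1), (1, 0, -1), (-1, 0, 1), (-1, 0, -1),
    (0, 1, 1), (0, 1, -1), (0, -1, 1), (0, -1, -1)}

theorem even_sum_and_dot3_self_of_mem_d3Roots :
    ∀ v ∈ d3Roots, Even (v.1 + v.2.1 + v.2.2) ∧ dot3 v v = 2 := by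
  decide

theorem exists_mem_d3Roots_lt_dot3 {n : ℕ} {x : ℤ × ℤ × ℤ} (hx : x ∉ LamDagStar n) :
    ∃ v ∈ d3Roots, n < dot3 x v := by
  by_contra! h
  simp only [d3Roots, mem_insert, mem_singleton, forall_eq_or_imp, forall_eq, dot3] at h
  simp only [LamDagStar, box3, mem_filter, mem_Icc, Prod.le_def, abs_le] at hx
  omega

theorem dot3_self_nonneg (x : ℤ × ℤ × ℤ) : 0 ≤ dot3 x x :=
  add_nonneg (add_nonneg (mul_self_nonneg _) (mul_self_nonneg _)) (mul_self_nonneg _)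

theorem dot3_sub_smul_self_lt {n : ℕ} (hn : 0 < n) {x v : ℤ × ℤ × ℤ} (hv : dot3 v v = 2)
    (hxv : n < dot3 x v) : dot3 (x - (n : ℤ) • v) (x - (n : ℤ) • v) < dot3 x x := by
  have hn' : (0 : ℤ) < n := by exact_mod_cast hn
  have hexpand : dot3 (x - (n : ℤ) • v) (x - (n : ℤ) • v)
      = dot3 x x - 2 * n * dot3 x v + n ^ 2 * dot3 v v := by
    simp only [dot3, Prod.fst_sub, Prod.snd_sub, Prod.smul_fst, Prod.smul_snd, smul_eq_mul]
    ring
  rw [hexpand, hv]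
  nlinarith

theorem exists_mem_LamDagStar_fccCong {n : ℕ} (hn : 0 < n) (x : ℤ × ℤ × ℤ) :
    ∃ ν ∈ LamDagStar n, fccCong n ν x := by
  by_cases hx : x ∈ LamDagStar n
  · exact ⟨x, hx, fccCong_refl n x⟩
  obtain ⟨v, hv, hxv⟩ := exists_mem_d3Roots_lt_dot3 hx
  obtain ⟨hv_even, hv_norm⟩ := even_sum_and_dot3_self_of_mem_d3Roots v hv
  have hlt := dot3_sub_smul_self_lt hn hv_norm hxv
  obtain ⟨ν, hν, hcong⟩ := exists_mem_LamDagStar_fccCong hn (x - (n : ℤ) • v)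
  exact ⟨ν, hν, hcong.trans (fccCong_sub_smul x hv_even)⟩
termination_by (dot3 x x).toNat
decreasing_by
  have := dot3_self_nonneg (x - (n : ℤ) • v)
  omega

theorem sum_mu3_mul_eq_sum_fccBox {n : ℕ} (hn : 0 < n) (χ : ℤ × ℤ × ℤ → ℂ)
    (hχ : ∀ a b, fccCong n a b → χ a = χ b) :
    ∑ ν ∈ LamDagStar n, (mu3 n ν : ℂ) * χ ν = ∑ f ∈ fccBox n, χ f := by
  have himage : (LamDagStar n).image (fccReduce n) = fccBox n := by
    ext f
    refine ⟨fun hf => ?_, fun hf => ?_⟩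
    · obtain ⟨ν, -, rfl⟩ := mem_image.mp hf
      exact fccReduce_mem_fccBox hn ν
    · obtain ⟨ν, hν, hcong⟩ := exists_mem_LamDagStar_fccCong hn f
      exact mem_image.mpr
        ⟨ν, hν, (fccReduce_eq_of_fccCong hn hcong).trans (fccReduce_of_mem_fccBox hf)⟩
  rw [← himage, ← sum_div_card_fiber]
  refine sum_congr rfl fun ν _ => ?_
  simp only [mu3, fccCong_iff_fccReduce_eq hn, hχ ν _ (fccCong_fccReduce n ν)]
  push_cast
  ring

noncomputable def zeta2n (n : ℕ) : ℂ := Complex.exp (2 * Real.pi * Complex.I / (2 * n : ℕ))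

theorem zeta2n_ne_zero (n : ℕ) : zeta2n n ≠ 0 := Complex.exp_ne_zero _

theorem isPrimitiveRoot_zeta2n {n : ℕ} (hn : 0 < n) : IsPrimitiveRoot (zeta2n n) (2 * n) :=
  Complex.isPrimitiveRoot_exp _ (by omega)

theorem e3_pt3 (n : ℕ) (ν m : ℤ × ℤ × ℤ) : e3 ν (pt3 n m) = zeta2n n ^ dot3 ν m := by
  rw [zeta2n, ← Complex.exp_int_mul, e3, pt3, dot3]
  push_cast
  ring_nf

theorem zeta2n_zpow_dot3_eq_of_fccCong {n : ℕ} (hn : 0 < n) {m : ℤ × ℤ × ℤ}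
    (hm : m.1 % 2 = m.2.1 % 2 ∧ m.2.1 % 2 = m.2.2 % 2) {a b : ℤ × ℤ × ℤ} (h : fccCong n a b) :
    zeta2n n ^ dot3 a m = zeta2n n ^ dot3 b m := by
  obtain ⟨p, ⟨r, hr⟩, h₁, h₂, h₃⟩ := h
  obtain ⟨s, hs⟩ : ∃ s, m.2.1 = m.1 + 2 * s := ⟨(m.2.1 - m.1) / 2, by omega⟩
  obtain ⟨t, ht⟩ : ∃ t, m.2.2 = m.1 + 2 * t := ⟨(m.2.2 - m.1) / 2, by omega⟩
  have hdot : dot3 a m = dot3 b m + ((2 * n : ℕ) : ℤ) * (m.1 * r + s * p.2.1 + t * p.2.2) := by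
    simp only [dot3]
    push_cast
    linear_combination m.1 * h₁ + m.2.1 * h₂ + m.2.2 * h₃ + (n * p.2.1) * hs + (n * p.2.2) * ht
      + (n * m.1) * hr
  rw [hdot, zpow_add₀ (zeta2n_ne_zero n), zpow_mul, zpow_natCast,
    (isPrimitiveRoot_zeta2n hn).pow_eq_one, one_zpow, mul_one]

theorem sum_fccBox_zeta2n_zpow_dot3 (n : ℕ) (m : ℤ × ℤ × ℤ) :
    ∑ f ∈ fccBox n, zeta2n n ^ dot3 f m
      = (∑ i ∈ range (2 * n), zeta2n n ^ ((i : ℤ) * m.1))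
        * (∑ i ∈ range n, zeta2n n ^ ((i : ℤ) * m.2.1))
        * (∑ i ∈ range n, zeta2n n ^ ((i : ℤ) * m.2.2)) := by
  have hsplit : ∀ f : ℤ × ℤ × ℤ, zeta2n n ^ dot3 f m
      = zeta2n n ^ (f.1 * m.1) * zeta2n n ^ (f.2.1 * m.2.1) * zeta2n n ^ (f.2.2 * m.2.2) :=
    fun f => by rw [dot3, zpow_add₀ (zeta2n_ne_zero n), zpow_add₀ (zeta2n_ne_zero n)]
  rw [sum_congr rfl fun f _ => hsplit f, fccBox, sum_product_three_mul _ _ _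
    (fun a => zeta2n n ^ (a * m.1)) (fun b => zeta2n n ^ (b * m.2.1))
    (fun c => zeta2n n ^ (c * m.2.2)),
    show (2 * n : ℤ) = ((2 * n : ℕ) : ℤ) by push_cast; rfl]
  simp only [Int.sum_Ico_zero_eq_sum_range]

theorem Phi3star_pt3 {n : ℕ} (hn : 0 < n) {m : ℤ × ℤ × ℤ}
    (hm : m.1 % 2 = m.2.1 % 2 ∧ m.2.1 % 2 = m.2.2 % 2) :
    Phi3star n (pt3 n m) = (if (2 * n : ℤ) ∣ m.1 then 1 else 0)
      * (if (2 * n : ℤ) ∣ m.2.1 then 1 else 0) * (if (2 * n : ℤ) ∣ m.2.2 then 1 else 0) := by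
  have hζ := isPrimitiveRoot_zeta2n hn
  rw [Phi3star, sum_congr rfl fun ν _ => by rw [e3_pt3],
    sum_mu3_mul_eq_sum_fccBox hn _ fun a b => zeta2n_zpow_dot3_eq_of_fccCong hn hm,
    sum_fccBox_zeta2n_zpow_dot3, hζ.sum_range_zpow_mul (dvd_mul_right _ _)]
  by_cases h₁ : ((2 * n : ℕ) : ℤ) ∣ m.1
  · -- `m.1` is even, hence so are `m.2.1` and `m.2.2`
    have hdvd : ∀ c : ℤ, c % 2 = m.1 % 2 → ((2 * n : ℕ) : ℤ) ∣ (n : ℕ) * c := fun c hc => by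
      push_cast
      have h₁' : (2 : ℤ) ∣ m.1 := dvd_trans ⟨n, by push_cast; ring⟩ h₁
      exact mul_comm (2 : ℤ) n ▸ mul_dvd_mul_left _ (by omega)
    rw [hζ.sum_range_zpow_mul (hdvd _ hm.1.symm), hζ.sum_range_zpow_mul (hdvd _ (by omega))]
    push_cast at h₁ ⊢
    have hn' : (n : ℂ) ≠ 0 := by exact_mod_cast hn.ne'
    split_ifs <;> field_simp <;> simp
  · push_cast at h₁ ⊢
    simp [h₁]

theorem sum_sign_ite_dvd_mul_sub {n : ℕ} (hn : 0 < n) {a b : ℤ} (ha : 0 ≤ a ∧ a ≤ n)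
    (hb : 0 ≤ b ∧ b ≤ n) :
    ∑ e ∈ ({-1, 1} : Finset ℤ), (if (2 * n : ℤ) ∣ e * a - b then (1 : ℂ) else 0)
      = if b = a then (if a = 0 ∨ a = n then 2 else 1) else 0 := by
  have hplus : (2 * n : ℤ) ∣ 1 * a - b ↔ b = a := by
    refine ⟨fun h => ?_, fun h => by simp [h]⟩
    have := Int.eq_zero_of_abs_lt_dvd h (by rw [abs_lt]; omega)
    omega
  have hminus : (2 * n : ℤ) ∣ -1 * a - b ↔ b = a ∧ (a = 0 ∨ a = n) := by
    refine ⟨fun h => ?_, ?_⟩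
    · -- `a + b ∈ [0, 2n]` is a multiple of `2n`
      have h' : (2 * n : ℤ) ∣ a + b := by
        rwa [← dvd_neg, show -(-1 * a - b) = a + b by ring] at h
      by_cases hlt : a + b < 2 * n
      · have := Int.eq_zero_of_dvd_of_nonneg_of_lt (by omega) hlt h'
        omega
      · omega
    · rintro ⟨rfl, rfl | rfl⟩
      · simp
      · exact ⟨-1, by ring⟩
  rw [sum_pair (by decide), if_congr hminus rfl rfl, if_congr hplus rfl rfl]
  split_ifs <;> simp_all [one_add_one_eq_two]

theorem Phi3star_sign_mul_sub {n : ℕ} (hn : 0 < n) {j k : ℤ × ℤ × ℤ}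
    (hj : j.1 % 2 = j.2.1 % 2 ∧ j.2.1 % 2 = j.2.2 % 2)
    (hk : k.1 % 2 = k.2.1 % 2 ∧ k.2.1 % 2 = k.2.2 % 2) {e₁ e₂ e₃ : ℤ}
    (he₁ : e₁ ∈ ({-1, 1} : Finset ℤ)) (he₂ : e₂ ∈ ({-1, 1} : Finset ℤ))
    (he₃ : e₃ ∈ ({-1, 1} : Finset ℤ)) :
    Phi3star n ((e₁ : ℝ) * (pt3 n j).1 - (k.1 : ℝ) / (2 * n),
        (e₂ : ℝ) * (pt3 n j).2.1 - (k.2.1 : ℝ) / (2 * n),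
        (e₃ : ℝ) * (pt3 n j).2.2 - (k.2.2 : ℝ) / (2 * n))
      = (if (2 * n : ℤ) ∣ e₁ * j.1 - k.1 then 1 else 0)
        * (if (2 * n : ℤ) ∣ e₂ * j.2.1 - k.2.1 then 1 else 0)
        * (if (2 * n : ℤ) ∣ e₃ * j.2.2 - k.2.2 then 1 else 0) := by
  have hpar : ∀ e ∈ ({-1, 1} : Finset ℤ), ∀ a b : ℤ, (e * a - b) % 2 = (a + b) % 2 := by
    intro e he a b
    rcases mem_insert.mp he with rfl | he
    · omega
    · rw [mem_singleton.mp he]; omega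
  have hnode : ((e₁ : ℝ) * (pt3 n j).1 - (k.1 : ℝ) / (2 * n),
      (e₂ : ℝ) * (pt3 n j).2.1 - (k.2.1 : ℝ) / (2 * n),
      (e₃ : ℝ) * (pt3 n j).2.2 - (k.2.2 : ℝ) / (2 * n))
      = pt3 n (e₁ * j.1 - k.1, e₂ * j.2.1 - k.2.1, e₃ * j.2.2 - k.2.2) := by
    simp only [pt3, Prod.mk.injEq]
    push_cast
    refine ⟨?_, ?_, ?_⟩ <;> ring
  refine hnode ▸ Phi3star_pt3 hn ?_
  simp only [hpar _ he₁, hpar _ he₂, hpar _ he₃]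
  omega

theorem lam3_mul_boundary_weights (n : ℕ) (k : ℤ × ℤ × ℤ) :
    (lam3 n k : ℂ) * (1 / 8) * ((if k.1 = 0 ∨ k.1 = n then 2 else 1)
      * (if k.2.1 = 0 ∨ k.2.1 = n then 2 else 1) * (if k.2.2 = 0 ∨ k.2.2 = n then 2 else 1))
      = 1 := by
  simp only [lam3]
  split_ifs <;> norm_num

theorem ell3_pt3 {n : ℕ} (hn : 0 < n) {j k : ℤ × ℤ × ℤ} (hj : j ∈ Xi3 n) (hk : k ∈ Xi3 n) :
    ell3 n k (pt3 n j) = if k = j then 1 else 0 := by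
  simp only [Xi3, mem_filter, mem_Icc, Prod.le_def] at hj hk
  obtain ⟨⟨⟨hj₁, hj₂, hj₃⟩, hj₁', hj₂', hj₃'⟩, hj_par⟩ := hj
  obtain ⟨⟨⟨hk₁, hk₂, hk₃⟩, hk₁', hk₂', hk₃'⟩, hk_par⟩ := hk
  rw [ell3, sum_congr rfl fun ε hε => Phi3star_sign_mul_sub hn hj_par hk_par
      (mem_product.mp hε).1 (mem_product.mp (mem_product.mp hε).2).1
      (mem_product.mp (mem_product.mp hε).2).2,
    sum_product_three_mul _ _ _
      (fun e => if (2 * n : ℤ) ∣ e * j.1 - k.1 then (1 : ℂ) else 0)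
      (fun e => if (2 * n : ℤ) ∣ e * j.2.1 - k.2.1 then (1 : ℂ) else 0)
      (fun e => if (2 * n : ℤ) ∣ e * j.2.2 - k.2.2 then (1 : ℂ) else 0),
    sum_sign_ite_dvd_mul_sub hn ⟨hj₁, hj₁'⟩ ⟨hk₁, hk₁'⟩,
    sum_sign_ite_dvd_mul_sub hn ⟨hj₂, hj₂'⟩ ⟨hk₂, hk₂'⟩,
    sum_sign_ite_dvd_mul_sub hn ⟨hj₃, hj₃'⟩ ⟨hk₃, hk₃'⟩]
  by_cases hkj : k = j
  · subst hkj
    simp only [if_true, lam3_mul_boundary_weights]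
  · obtain h | h | h : k.1 ≠ j.1 ∨ k.2.1 ≠ j.2.1 ∨ k.2.2 ≠ j.2.2 := by
      contrapose! hkj
      exact Prod.ext hkj.1 (Prod.ext hkj.2.1 hkj.2.2)
    all_goals simp [h, hkj]

theorem algebraic_interpolation_nodes_3d (n : ℕ) (hn : 0 < n) :
    (∀ f : ℝ × ℝ × ℝ → ℂ, ∀ j ∈ Xi3 n,
      ∑ k ∈ Xi3 n, f (pt3 n k) * ell3 n k (pt3 n j) = f (pt3 n j)) ∧
    (∀ j ∈ Xi3 n, ∀ k ∈ Xi3 n, ell3 n k (pt3 n j) = if k = j then 1 else 0) := by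
  refine ⟨fun f j hj => ?_, fun j hj k hk => ell3_pt3 hn hj hk⟩
  rw [sum_congr rfl fun k hk => by rw [ell3_pt3 hn hj hk]]
  simp only [mul_ite, mul_one, mul_zero, sum_ite_eq', if_pos hj]
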